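/- arXiv:2402.17284 — 3 statements merged into one kernel-verified Lean document; each statement's English description precedes it below -/
import Mathlib

section
/- Let Q be a finite unital quantale with unit e which is unitally nondistributive, i.e. e ≤ sSup {β | β ◁ e} and there exists A ⊆ Q with e ⊓ sSup A ≰ ⨆ a ∈ A, (e ⊓ a). Then there exist α, β ∈ Q such that e ⊓ (α ⊔ β) ≰ (e ⊓ α) ⊔ (e ⊓ β) and e ≰ α ⊔ β. In particular the underlying lattice of Q is strictly nondistributive. -/
/-!
Every element totally below `e` lies below `e ⊓ a` for some `a` of any cover `A` of `e`, so a
unit that is the join of the elements totally below it distributes over every join above it.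
Hence if `e ⊓ (α ⊔ β) ≤ (e ⊓ α) ⊔ (e ⊓ β)` failed only for pairs with `e ≤ α ⊔ β`, binary
distributivity at `e` would hold everywhere, and by finiteness so would distributivity over
arbitrary joins, contradicting unital nondistributivity.
-/

section CompleteLattice

variable {L : Type*} [CompleteLattice L]

def TotallyBelow (b a : L) : Prop :=
  ∀ A : Set L, a ≤ sSup A → ∃ c ∈ A, b ≤ c

theorem TotallyBelow.le {a b : L} (h : TotallyBelow b a) : b ≤ a := by
  obtain ⟨c, rfl, hbc⟩ := h {a} sSup_singleton.ge
  exact hbc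

theorem le_iSup_inf_of_le_sSup {e : L} (he : e ≤ sSup {b | TotallyBelow b e}) {A : Set L}
    (hA : e ≤ sSup A) : e ≤ ⨆ a ∈ A, e ⊓ a := by
  refine he.trans (sSup_le fun b hb => ?_)
  obtain ⟨c, hc, hbc⟩ := hb A hA
  exact le_iSup₂_of_le c hc (le_inf (TotallyBelow.le hb) hbc)

theorem inf_sSup_le_iSup_inf_of_finite {e : L}
    (h : ∀ a b : L, e ⊓ (a ⊔ b) ≤ (e ⊓ a) ⊔ (e ⊓ b)) {A : Set L} (hA : A.Finite) :
    e ⊓ sSup A ≤ ⨆ a ∈ A, e ⊓ a := by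
  induction A, hA using Set.Finite.induction_on with
  | empty => simp
  | @insert a s _ _ ih =>
    calc e ⊓ sSup (insert a s) ≤ (e ⊓ a) ⊔ (e ⊓ sSup s) := by rw [sSup_insert]; exact h a _
      _ ≤ (e ⊓ a) ⊔ ⨆ x ∈ s, e ⊓ x := sup_le_sup_left ih _
      _ = ⨆ x ∈ insert a s, e ⊓ x := iSup_insert.symm

end CompleteLattice

theorem stmt_6_general {Q : Type*} [CompleteLattice Q] [Fintype Q]
    (e : Q)
    (he_approx : e ≤ sSup {β : Q | ∀ A : Set Q, e ≤ sSup A → ∃ c ∈ A, β ≤ c})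
    (hnd : ∃ A : Set Q, ¬ e ⊓ sSup A ≤ ⨆ a ∈ A, e ⊓ a) :
    ∃ α β : Q, ¬ e ⊓ (α ⊔ β) ≤ (e ⊓ α) ⊔ (e ⊓ β) ∧ ¬ e ≤ α ⊔ β := by
  by_contra! hcover
  obtain ⟨A, hA⟩ := hnd
  refine hA (inf_sSup_le_iSup_inf_of_finite (fun α β => ?_) A.toFinite)
  by_contra hαβ
  have hpair : e ≤ sSup {α, β} := (hcover α β hαβ).trans sSup_pair.ge
  have hle := le_iSup_inf_of_le_sSup he_approx hpair
  rw [iSup_pair] at hle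
  exact hαβ (inf_le_left.trans hle)

/-- In a finite unitally nondistributive unital quantale with unit `e`,
there are `α, β` with `e ⊓ (α ⊔ β) ≰ (e ⊓ α) ⊔ (e ⊓ β)` and `e ≰ α ⊔ β`; in
particular the underlying lattice is strictly nondistributive. -/
theorem stmt_6 {Q : Type*} [CompleteLattice Q] [Fintype Q] (mul : Q → Q → Q)
    (hassoc : ∀ a b c : Q, mul (mul a b) c = mul a (mul b c))
    (hsSup_left : ∀ (A : Set Q) (b : Q), mul (sSup A) b = ⨆ a ∈ A, mul a b)
    (hsSup_right : ∀ (A : Set Q) (b : Q), mul b (sSup A) = ⨆ a ∈ A, mul b a)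
    (e : Q) (he_left : ∀ a : Q, mul e a = a) (he_right : ∀ a : Q, mul a e = a)
    (he_approx : e ≤ sSup {β : Q | ∀ A : Set Q, e ≤ sSup A → ∃ c ∈ A, β ≤ c})
    (hnd : ∃ A : Set Q, ¬ e ⊓ sSup A ≤ ⨆ a ∈ A, e ⊓ a) :
    ∃ α β : Q, ¬ e ⊓ (α ⊔ β) ≤ (e ⊓ α) ⊔ (e ⊓ β) ∧ ¬ e ≤ α ⊔ β :=
  stmt_6_general e he_approx hnd
end

section
/- Let Q be a quantale and γ ∈ Q with γ ≠ ⊤. Suppose there exist a unital quantale M with unit e and a map ι : Q → M which is injective, multiplicative (ι (p * q) = ι p * ι q) and preserves arbitrary suprema, such that every element of M lies in range ι ∪ {e, ⊤_M}, e ∉ range ι, ⊤_M ∉ range ι, {m ∈ M | m ≤ e} \ {e} = {m ∈ M | m ≤ ι γ}, and {m ∈ M | e ≤ m} \ {e} = {⊤_M}. Then Q satisfies: (a) γ * α ⊔ α * γ ≤ α for all α ∈ Q, and (b) for all α ∈ Q and all β ∈ Q with β ≰ γ, ⊤_Q * α ≤ (β * α) ⊔ α and α * ⊤_Q ≤ (α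 * β) ⊔ α. -/
/-! Since `ι γ` lies below the unit `e`, multiplying by `γ` can only shrink an element,
which gives (a). If `β ≰ γ`, then `ι β ≰ e`, because the elements strictly below `e` are
exactly those below `ι γ`. So `e ⊔ ι β` lies strictly above `e` and must be `⊤`; distributing
`⊤ * ι α = (e ⊔ ι β) * ι α = ι α ⊔ ι β * ι α` and pulling back along the order embedding
`ι` gives (b). -/

section SupPreserving

variable {α β : Type*} [CompleteLattice α] [CompleteLattice β] {f : α → β}

theorem map_sup_of_map_sSup (hf : ∀ s : Set α, f (sSup s) = ⨆ a ∈ s, f a) (a b : α) :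
    f (a ⊔ b) = f a ⊔ f b := by
  rw [← sSup_pair, hf, iSup_pair]

theorem monotone_of_map_sSup (hf : ∀ s : Set α, f (sSup s) = ⨆ a ∈ s, f a) : Monotone f :=
  Monotone.of_map_sup (map_sup_of_map_sSup hf)

theorem map_le_map_iff_of_injective_of_map_sup (hinj : Function.Injective f)
    (hf : ∀ a b, f (a ⊔ b) = f a ⊔ f b) {a b : α} : f a ≤ f b ↔ a ≤ b := by
  rw [← sup_eq_right, ← hf, hinj.eq_iff, sup_eq_right]

end SupPreserving

section UnitalMultiplication

variable {M : Type*} [CompleteLattice M] {mul : M → M → M} {e : M}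

theorem mul_le_of_le_unit_left
    (hdistrib : ∀ (A : Set M) (b : M), mul (sSup A) b = ⨆ a ∈ A, mul a b)
    (he : ∀ m, mul e m = m) {u : M} (hu : u ≤ e) (m : M) : mul u m ≤ m :=
  (he m).le.trans' (monotone_of_map_sSup (f := (mul · m)) (hdistrib · m) hu)

theorem mul_le_of_le_unit_right
    (hdistrib : ∀ (A : Set M) (b : M), mul b (sSup A) = ⨆ a ∈ A, mul b a)
    (he : ∀ m, mul m e = m) {u : M} (hu : u ≤ e) (m : M) : mul m u ≤ m :=
  (he m).le.trans' (monotone_of_map_sSup (f := mul m) (hdistrib · m) hu)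

theorem top_mul_eq_of_unit_sup_eq_top
    (hdistrib : ∀ (A : Set M) (b : M), mul (sSup A) b = ⨆ a ∈ A, mul a b)
    (he : ∀ m, mul e m = m) {u : M} (hu : e ⊔ u = ⊤) (m : M) : mul ⊤ m = m ⊔ mul u m := by
  rw [← hu, map_sup_of_map_sSup (f := (mul · m)) (hdistrib · m), he]

theorem mul_top_eq_of_unit_sup_eq_top
    (hdistrib : ∀ (A : Set M) (b : M), mul b (sSup A) = ⨆ a ∈ A, mul b a)
    (he : ∀ m, mul m e = m) {u : M} (hu : e ⊔ u = ⊤) (m : M) : mul m ⊤ = m ⊔ mul m u := by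
  rw [← hu, map_sup_of_map_sSup (f := mul m) (hdistrib · m), he]

end UnitalMultiplication

theorem stmt_12_general {Q : Type u} [CompleteLattice Q] (mul : Q → Q → Q)
    (γ : Q)
    {M : Type v} [CompleteLattice M] (mulM : M → M → M) (e : M)
    (hsSup_leftM : ∀ (A : Set M) (b : M), mulM (sSup A) b = ⨆ a ∈ A, mulM a b)
    (hsSup_rightM : ∀ (A : Set M) (b : M), mulM b (sSup A) = ⨆ a ∈ A, mulM b a)
    (heM : ∀ m : M, mulM e m = m ∧ mulM m e = m)
    (ι : Q → M) (hinj : Function.Injective ι)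
    (hmul : ∀ p q : Q, ι (mul p q) = mulM (ι p) (ι q))
    (hsup : ∀ A : Set Q, ι (sSup A) = ⨆ a ∈ A, ι a)
    (he_notin : e ∉ Set.range ι)
    (hdown : {m : M | m ≤ e} \ {e} = {m : M | m ≤ ι γ})
    (hup : {m : M | e ≤ m} \ {e} = {(⊤ : M)}) :
    (∀ α : Q, mul γ α ⊔ mul α γ ≤ α) ∧
    (∀ α β : Q, ¬ β ≤ γ →
      mul ⊤ α ≤ mul β α ⊔ α ∧ mul α ⊤ ≤ mul α β ⊔ α) := by
  have hι_sup := map_sup_of_map_sSup hsup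
  have hι_le {p q : Q} : ι p ≤ ι q ↔ p ≤ q :=
    map_le_map_iff_of_injective_of_map_sup hinj hι_sup
  have hγe : ι γ ≤ e := (hdown.symm.subset le_rfl).1
  refine ⟨fun α => sup_le ?_ ?_, fun α β hβ => ?_⟩
  · rw [← hι_le, hmul]
    exact mul_le_of_le_unit_left hsSup_leftM (heM · |>.1) hγe _
  · rw [← hι_le, hmul]
    exact mul_le_of_le_unit_right hsSup_rightM (heM · |>.2) hγe _
  have hβe : ¬ ι β ≤ e := fun h =>
    hβ (hι_le.1 (hdown.subset ⟨h, fun h' => he_notin ⟨β, h'⟩⟩))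
  have hunit_sup : e ⊔ ι β = ⊤ :=
    hup.subset ⟨le_sup_left, fun h => hβe (h ▸ le_sup_right)⟩
  constructor
  · rw [← hι_le, hι_sup, hmul, hmul, sup_comm,
      ← top_mul_eq_of_unit_sup_eq_top hsSup_leftM (heM · |>.1) hunit_sup]
    exact monotone_of_map_sSup (f := (mulM · (ι α))) (hsSup_leftM · _) le_top
  · rw [← hι_le, hι_sup, hmul, hmul, sup_comm,
      ← mul_top_eq_of_unit_sup_eq_top hsSup_rightM (heM · |>.2) hunit_sup]
    exact monotone_of_map_sSup (f := mulM (ι α)) (hsSup_rightM · _) le_top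

/-- If a quantale `Q` with `γ ≠ ⊤` admits an extension to a unital
quantale `M` by an isolated unit `e` (with `e⁻ = ι γ`, `e⁺ = ⊤`) in which `Q` embeds
as a subquantale, then `Q` satisfies conditions (a) and (b). -/
theorem stmt_12 {Q : Type u} [CompleteLattice Q] (mul : Q → Q → Q)
    (hassoc : ∀ a b c : Q, mul (mul a b) c = mul a (mul b c))
    (hsSup_left : ∀ (A : Set Q) (b : Q), mul (sSup A) b = ⨆ a ∈ A, mul a b)
    (hsSup_right : ∀ (A : Set Q) (b : Q), mul b (sSup A) = ⨆ a ∈ A, mul b a)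
    (γ : Q) (hγ : γ ≠ ⊤)
    {M : Type v} [CompleteLattice M] (mulM : M → M → M) (e : M)
    (hassocM : ∀ a b c : M, mulM (mulM a b) c = mulM a (mulM b c))
    (hsSup_leftM : ∀ (A : Set M) (b : M), mulM (sSup A) b = ⨆ a ∈ A, mulM a b)
    (hsSup_rightM : ∀ (A : Set M) (b : M), mulM b (sSup A) = ⨆ a ∈ A, mulM b a)
    (heM : ∀ m : M, mulM e m = m ∧ mulM m e = m)
    (ι : Q → M) (hinj : Function.Injective ι)
    (hmul : ∀ p q : Q, ι (mul p q) = mulM (ι p) (ι q))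
    (hsup : ∀ A : Set Q, ι (sSup A) = ⨆ a ∈ A, ι a)
    (hcover : ∀ m : M, m ∈ Set.range ι ∨ m = e ∨ m = ⊤)
    (he_notin : e ∉ Set.range ι) (htop_notin : (⊤ : M) ∉ Set.range ι)
    (hdown : {m : M | m ≤ e} \ {e} = {m : M | m ≤ ι γ})
    (hup : {m : M | e ≤ m} \ {e} = {(⊤ : M)}) :
    (∀ α : Q, mul γ α ⊔ mul α γ ≤ α) ∧
    (∀ α β : Q, ¬ β ≤ γ →
      mul ⊤ α ≤ mul β α ⊔ α ∧ mul α ⊤ ≤ mul α β ⊔ α) :=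
  stmt_12_general mul γ mulM e hsSup_leftM hsSup_rightM heM ι hinj hmul hsup he_notin hdown hup
end

section
/- Let Q be a quantale on the pentagon N5, with elements ⊥ < α < γ < ⊤, ⊥ < β < ⊤ and β incomparable with α and γ, satisfying γ * a ⊔ a * γ ≤ a for all a ∈ Q, and assume γ * γ ≠ γ (equivalently, Q is not unital). Then Q is semi-unital (a ≤ ⊤ * a and a ≤ a * ⊤ for all a ∈ Q) if and only if γ * γ = α, β * γ = β and γ * β = β. -/
/-! In this lattice `β` is a complement of both `α` and `γ`, so `⊤ * γ = γ * γ ⊔ β * γ`, where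
`γ * γ < γ` and `β * γ ≤ β`. Only `⊥` and `β` lie below `β`, and only `⊥` and `α` strictly below `γ`;
hence `γ ≤ ⊤ * γ` forces first `β * γ = β` and then `γ * γ = α`. Conversely these values give
`⊤ * γ = α ⊔ β = ⊤`, hence `⊤ * α = (⊤ * γ) * γ = ⊤`, and `β`, `⊤` are handled by monotonicity.
The conditions on `a * ⊤` are the same statements for the opposite multiplication `flip mul`. -/

theorem sup_mul_of_sSup_mul {Q : Type*} [CompleteLattice Q] {mul : Q → Q → Q}
    (h : ∀ (A : Set Q) (b : Q), mul (sSup A) b = ⨆ a ∈ A, mul a b) (x y b : Q) :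
    mul (x ⊔ y) b = mul x b ⊔ mul y b := by
  rw [← sSup_pair, h, iSup_pair]

theorem monotone_of_map_sup {L M : Type*} [SemilatticeSup L] [SemilatticeSup M] {f : L → M}
    (h : ∀ x y, f (x ⊔ y) = f x ⊔ f y) : Monotone f :=
  OrderHomClass.mono (SupHom.mk f h)

namespace Pentagon

variable {Q : Type*} [CompleteLattice Q] {α γ β : Q}

theorem sup_eq_top_of_not_le (hcover : ∀ q : Q, q = ⊥ ∨ q = α ∨ q = γ ∨ q = β ∨ q = ⊤)
    (hβα : ¬ β ≤ α) (hβγ : ¬ β ≤ γ) {x : Q} (hx : ¬ x ≤ β) : x ⊔ β = ⊤ := by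
  rcases hcover (x ⊔ β) with h | h | h | h | h
  · exact absurd ((h ▸ le_sup_left : x ≤ ⊥).trans bot_le) hx
  · exact absurd (h ▸ le_sup_right) hβα
  · exact absurd (h ▸ le_sup_right) hβγ
  · exact absurd (h ▸ le_sup_left) hx
  · exact h

theorem eq_bot_or_eq_of_le (hcover : ∀ q : Q, q = ⊥ ∨ q = α ∨ q = γ ∨ q = β ∨ q = ⊤)
    (hαβ : ¬ α ≤ β) (hγβ : ¬ γ ≤ β) {x : Q} (hx : x ≤ β) : x = ⊥ ∨ x = β := by
  rcases hcover x with rfl | rfl | rfl | rfl | rfl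
  · exact .inl rfl
  · exact absurd hx hαβ
  · exact absurd hx hγβ
  · exact .inr rfl
  · exact absurd (le_top.trans hx) hγβ

theorem eq_bot_or_eq_of_lt (hcover : ∀ q : Q, q = ⊥ ∨ q = α ∨ q = γ ∨ q = β ∨ q = ⊤)
    (hβγ : ¬ β ≤ γ) {x : Q} (hx : x < γ) : x = ⊥ ∨ x = α := by
  rcases hcover x with rfl | rfl | rfl | rfl | rfl
  · exact .inl rfl
  · exact .inr rfl
  · exact absurd hx (lt_irrefl _)
  · exact absurd hx.le hβγ
  · exact absurd hx not_top_lt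

theorem mul_gamma_eq_of_le_top_mul (hcover : ∀ q : Q, q = ⊥ ∨ q = α ∨ q = γ ∨ q = β ∨ q = ⊤)
    (hβα : ¬ β ≤ α ∧ ¬ α ≤ β) (hβγ : ¬ β ≤ γ ∧ ¬ γ ≤ β) {mul : Q → Q → Q}
    (hsup : ∀ x y b : Q, mul (x ⊔ y) b = mul x b ⊔ mul y b) (hγγ : mul γ γ < γ)
    (hβγ_le : mul β γ ≤ β) (hγ : γ ≤ mul ⊤ γ) : mul γ γ = α ∧ mul β γ = β := by
  rw [← sup_eq_top_of_not_le hcover hβα.1 hβγ.1 hβγ.2, hsup] at hγ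
  have hβγ_eq : mul β γ = β := by
    refine (eq_bot_or_eq_of_le hcover hβα.2 hβγ.2 hβγ_le).resolve_left fun h => ?_
    rw [h, sup_bot_eq] at hγ
    exact hγ.not_gt hγγ
  refine ⟨(eq_bot_or_eq_of_lt hcover hβγ.1 hγγ).resolve_left fun h => ?_, hβγ_eq⟩
  rw [h, hβγ_eq, bot_sup_eq] at hγ
  exact hβγ.2 hγ

theorem le_top_mul_of_mul_gamma_eq (hcover : ∀ q : Q, q = ⊥ ∨ q = α ∨ q = γ ∨ q = β ∨ q = ⊤)
    (hβα : ¬ β ≤ α ∧ ¬ α ≤ β) (hβγ : ¬ β ≤ γ ∧ ¬ γ ≤ β) {mul : Q → Q → Q}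
    (hassoc : ∀ a b c : Q, mul (mul a b) c = mul a (mul b c))
    (hsupl : ∀ x y b : Q, mul (x ⊔ y) b = mul x b ⊔ mul y b)
    (hsupr : ∀ x y b : Q, mul b (x ⊔ y) = mul b x ⊔ mul b y)
    (hγγ : mul γ γ = α) (hβγ_eq : mul β γ = β) (hγβ_eq : mul γ β = β) (a : Q) :
    a ≤ mul ⊤ a := by
  have hγ : mul ⊤ γ = ⊤ := calc
    mul ⊤ γ = mul (γ ⊔ β) γ := by rw [sup_eq_top_of_not_le hcover hβα.1 hβγ.1 hβγ.2]
    _ = α ⊔ β := by rw [hsupl, hγγ, hβγ_eq]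
    _ = ⊤ := sup_eq_top_of_not_le hcover hβα.1 hβγ.1 hβα.2
  rcases hcover a with h | h | h | h | h <;> subst a
  · exact bot_le
  · calc α ≤ ⊤ := le_top
      _ = mul (mul ⊤ γ) γ := by rw [hγ, hγ]
      _ = mul ⊤ α := by rw [hassoc, hγγ]
  · exact le_top.trans_eq hγ.symm
  · calc β = mul γ β := hγβ_eq.symm
      _ ≤ mul ⊤ β := monotone_of_map_sup (f := (mul · β)) (hsupl · · β) le_top
  · calc ⊤ = mul ⊤ γ := hγ.symm
      _ ≤ mul ⊤ ⊤ := monotone_of_map_sup (hsupr · · ⊤) le_top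

end Pentagon

theorem stmt_17_general {Q : Type*} [CompleteLattice Q] (mul : Q → Q → Q)
    (hassoc : ∀ a b c : Q, mul (mul a b) c = mul a (mul b c))
    (hsSup_left : ∀ (A : Set Q) (b : Q), mul (sSup A) b = ⨆ a ∈ A, mul a b)
    (hsSup_right : ∀ (A : Set Q) (b : Q), mul b (sSup A) = ⨆ a ∈ A, mul b a)
    (α γ β : Q)
    (hcover : ∀ q : Q, q = ⊥ ∨ q = α ∨ q = γ ∨ q = β ∨ q = ⊤)
    (hβα : ¬ β ≤ α ∧ ¬ α ≤ β) (hβγ : ¬ β ≤ γ ∧ ¬ γ ≤ β)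
    (hprop : ∀ a : Q, mul γ a ⊔ mul a γ ≤ a)
    (hnonunital : mul γ γ ≠ γ) :
    (∀ a : Q, a ≤ mul ⊤ a ∧ a ≤ mul a ⊤) ↔
      (mul γ γ = α ∧ mul β γ = β ∧ mul γ β = β) := by
  have hsupl := sup_mul_of_sSup_mul hsSup_left
  have hsupr : ∀ x y b : Q, mul b (x ⊔ y) = mul b x ⊔ mul b y :=
    sup_mul_of_sSup_mul (mul := flip mul) hsSup_right
  have hassoc' : ∀ a b c : Q, flip mul (flip mul a b) c = flip mul a (flip mul b c) :=
    fun a b c => (hassoc c b a).symm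
  have hγγ : mul γ γ < γ := (le_sup_left.trans (hprop γ)).lt_of_ne hnonunital
  constructor
  · intro h
    obtain ⟨hγγ_eq, hβγ_eq⟩ := Pentagon.mul_gamma_eq_of_le_top_mul hcover hβα hβγ hsupl
      hγγ (le_sup_right.trans (hprop β)) (h γ).1
    obtain ⟨-, hγβ_eq⟩ := Pentagon.mul_gamma_eq_of_le_top_mul (mul := flip mul) hcover hβα hβγ
      hsupr hγγ (le_sup_left.trans (hprop β)) (h γ).2
    exact ⟨hγγ_eq, hβγ_eq, hγβ_eq⟩
  · rintro ⟨hγγ_eq, hβγ_eq, hγβ_eq⟩ a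
    exact ⟨Pentagon.le_top_mul_of_mul_gamma_eq hcover hβα hβγ hassoc hsupl hsupr hγγ_eq hβγ_eq
        hγβ_eq a,
      Pentagon.le_top_mul_of_mul_gamma_eq (mul := flip mul) hcover hβα hβγ hassoc' hsupr hsupl
        hγγ_eq hγβ_eq hβγ_eq a⟩

/-- Let `Q` be a quantale on the pentagon `N5` satisfying
`γ * a ⊔ a * γ ≤ a` for all `a`, with `γ * γ ≠ γ` (non-unital). Then `Q` is
semi-unital iff `γ * γ = α`, `β * γ = β` and `γ * β = β`. -/
theorem stmt_17 {Q : Type*} [CompleteLattice Q] (mul : Q → Q → Q)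
    (hassoc : ∀ a b c : Q, mul (mul a b) c = mul a (mul b c))
    (hsSup_left : ∀ (A : Set Q) (b : Q), mul (sSup A) b = ⨆ a ∈ A, mul a b)
    (hsSup_right : ∀ (A : Set Q) (b : Q), mul b (sSup A) = ⨆ a ∈ A, mul b a)
    (α γ β : Q)
    (hdistinct : ([⊥, α, γ, β, ⊤] : List Q).Pairwise (· ≠ ·))
    (hcover : ∀ q : Q, q = ⊥ ∨ q = α ∨ q = γ ∨ q = β ∨ q = ⊤)
    (h1 : (⊥ : Q) < α) (h2 : α < γ) (h3 : γ < ⊤) (h4 : (⊥ : Q) < β) (h5 : β < ⊤)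
    (hβα : ¬ β ≤ α ∧ ¬ α ≤ β) (hβγ : ¬ β ≤ γ ∧ ¬ γ ≤ β)
    (hprop : ∀ a : Q, mul γ a ⊔ mul a γ ≤ a)
    (hnonunital : mul γ γ ≠ γ) :
    (∀ a : Q, a ≤ mul ⊤ a ∧ a ≤ mul a ⊤) ↔
      (mul γ γ = α ∧ mul β γ = β ∧ mul γ β = β) :=
  stmt_17_general mul hassoc hsSup_left hsSup_right α γ β hcover hβα hβγ hprop hnonunital
end
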